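/- arXiv:2509.14963 — 3 statements merged into one kernel-verified Lean document; each statement's English description precedes it below -/
import Mathlib

section
/- Let R ⊆ Args \ {a} be the set of arguments other than a that can reach a, and set Y = Args \ (R ∪ {a}). Assume the semantics σ satisfies: (i) σ_{G↓(Args\R)}(a) = τ(a), and (ii) σ_{G↓(Args\X)}(a) = σ_G(a) whenever no element of X can reach a. If R and Y are both nonempty, then P = {R, Y} is a partition of Args \ {a} and Σ_{X ∈ P} SCtrb^R(X) = σ_G(a) − τ(a); hence the removal-based set contribution function satisfies weak quantitative contribution existence (there exists a partition P of Args \ {a} with Σ_{X ∈ P} SCtrb^R(X) = σ_G(a) − τ(a)). -/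
open Finset

theorem removal_based_weak_quantitative_contribution_existence
    {α : Type*} [DecidableEq α]
    (Args : Finset α) (a : α) (ha : a ∈ Args)
    (Att Supp : α → α → Prop)
    (τa : ℝ) (σhat : Finset α → ℝ)
    (R Y : Finset α)
    (hR : ∀ x, x ∈ R ↔ x ∈ Args.erase a ∧
      Relation.ReflTransGen (fun u v => Att u v ∨ Supp u v) x a)
    (hY : Y = Args.erase a \ R)
    (hstab : σhat (Args \ R) = τa)
    (hinv : ∀ X ⊆ Args.erase a,
      (∀ x ∈ X, ¬ Relation.ReflTransGen (fun u v => Att u v ∨ Supp u v) x a) →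
      σhat (Args \ X) = σhat Args)
    (hRne : R.Nonempty) (hYne : Y.Nonempty) :
    ((∀ X ∈ ({R, Y} : Finset (Finset α)), X.Nonempty) ∧
     (∀ X ∈ ({R, Y} : Finset (Finset α)), ∀ X' ∈ ({R, Y} : Finset (Finset α)),
        X ≠ X' → Disjoint X X') ∧
     ({R, Y} : Finset (Finset α)).biUnion id = Args.erase a) ∧
    (∑ X ∈ ({R, Y} : Finset (Finset α)), (σhat Args - σhat (Args \ X)) = σhat Args - τa) ∧
    (∃ P : Finset (Finset α),
      (∀ X ∈ P, X.Nonempty) ∧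
      (∀ X ∈ P, ∀ X' ∈ P, X ≠ X' → Disjoint X X') ∧
      P.biUnion id = Args.erase a ∧
      ∑ X ∈ P, (σhat Args - σhat (Args \ X)) = σhat Args - τa) := by
  have hRsub : R ⊆ Args.erase a := fun x hx => ((hR x).1 hx).1
  have hdisj : Disjoint R Y := by
    subst hY
    exact disjoint_sdiff
  have hRneY : R ≠ Y := by
    intro h
    obtain ⟨x, hx⟩ := hRne
    have := hdisj.forall_ne_finset hx (h ▸ hx)
    exact this rfl
  have hYsub : Y ⊆ Args.erase a := by
    subst hY; exact sdiff_subset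
  have hYinv : σhat (Args \ Y) = σhat Args := by
    refine hinv Y hYsub fun x hx hreach => ?_
    have hxR : x ∈ R := (hR x).2 ⟨hYsub hx, hreach⟩
    exact hdisj.forall_ne_finset hxR hx rfl
  have hunion : ({R, Y} : Finset (Finset α)).biUnion id = Args.erase a := by
    ext x
    simp only [mem_biUnion, mem_insert, mem_singleton, id]
    constructor
    · rintro ⟨S, (rfl | rfl), hx⟩
      · exact hRsub hx
      · exact hYsub hx
    · intro hx
      by_cases hxR : x ∈ R
      · exact ⟨R, Or.inl rfl, hxR⟩
      · exact ⟨Y, Or.inr rfl, by subst hY; exact mem_sdiff.2 ⟨hx, hxR⟩⟩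
  have hsum : ∑ X ∈ ({R, Y} : Finset (Finset α)), (σhat Args - σhat (Args \ X))
      = σhat Args - τa := by
    rw [Finset.sum_pair hRneY, hstab, hYinv]
    ring
  refine ⟨⟨?_, ?_, hunion⟩, hsum, ⟨{R, Y}, ?_, ?_, hunion, hsum⟩⟩ <;>
  · intro X hX
    simp only [mem_insert, mem_singleton] at hX
    first
    | (rcases hX with rfl | rfl; exacts [hRne, hYne])
    | (intro X' hX'
       simp only [mem_insert, mem_singleton] at hX'
       rcases hX with rfl | rfl <;> rcases hX' with rfl | rfl <;> intro hne <;>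
         first | exact absurd rfl hne | exact hdisj | exact hdisj.symm)
end

section
/- Let w ∈ (0,1] and define f : ℝ² → ℝ by f(x, y) = w · (1 − x) · (1 − y). Then f(1,1) = 0 ≠ w, while both partial derivatives of f vanish at (1,1): ∂f/∂x(1,1) = 0 and ∂f/∂y(1,1) = 0. Hence, in the QBAG with arguments {a, b, c}, attacks (b,a) and (c,a), initial strengths τ(a) = w, τ(b) = τ(c) = 1, evaluated under DFQuAD semantics (where the final strength of a equals f(τ(b), τ(c))), the max-gradient set contribution of every subset of {b, c} to a is 0 even though σ(a) = 0 ≠ τ(a) = w; i.e., the max-gradient set contribution function violates contribution existence for DFQuAD. -/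
open Finset

theorem max_gradient_violates_contribution_existence (w : ℝ)
    (hw : w ∈ Set.Ioc (0 : ℝ) 1) :
    let f : ℝ → ℝ → ℝ := fun x y => w * (1 - x) * (1 - y)
    f 1 1 = 0 ∧ f 1 1 ≠ w ∧
    deriv (fun x => f x 1) 1 = 0 ∧
    deriv (fun y => f 1 y) 1 = 0 ∧
    ∀ (X : Finset Bool) (hX : X.Nonempty),
      X.sup' hX (fun i => if i then deriv (fun x => f x 1) 1
                          else deriv (fun y => f 1 y) 1) = 0 := by
  intro f
  have hx : deriv (fun x => f x 1) 1 = 0 := by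
    have : (fun x => f x 1) = fun _ => 0 := by
      funext x; simp [f]
    rw [this, deriv_const]
  have hy : deriv (fun y => f 1 y) 1 = 0 := by
    have : (fun y => f 1 y) = fun _ => 0 := by
      funext y; simp [f]
    rw [this, deriv_const]
  refine ⟨by simp [f], by simp [f]; exact ne_of_lt hw.1, hx, hy, ?_⟩
  intro X hX
  apply le_antisymm
  · apply Finset.sup'_le
    intro i _
    cases i <;> simp [hx, hy]
  · obtain ⟨i, hi⟩ := hX
    calc (0:ℝ) = _ := by cases i <;> simp [hx, hy]
    _ ≤ _ := Finset.le_sup' _ hi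
end

section
/- Define g : ℝ → ℝ by g(u) = 1/2 − (1/2) · (u/2) / (1 + u/2) for u ≥ 0 (the final strength of topic a under SD-DFQuAD semantics in the chain c attacks b attacks a with τ(a) = 1/2, τ(c) = 1, as a function of τ(b) = u). Then g(0) = 1/2 and g′(0) = −1/4. Hence at τ(b) = 0 the gradient-based contribution of b to a is −1/4 < 0, whereas removing b from the graph leaves the final strength of a unchanged at 1/2 (so the removal delta is 0); thus the max-gradient set contribution function applied to {b} violates counterfactuality and quantitative counterfactuality for SD-DFQuAD. -/
theorem max_gradient_violates_counterfactuality :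
    let g : ℝ → ℝ := fun u => 1 / 2 - (1 / 2) * ((u / 2) / (1 + u / 2))
    g 0 = 1 / 2 ∧
    deriv g 0 = -(1 / 4) ∧
    deriv g 0 < 0 ∧
    g 0 - 1 / 2 = 0 ∧
    deriv g 0 ≠ g 0 - 1 / 2 := by
  intro g
  have hd : HasDerivAt g (-(1 / 4)) 0 := by
    have h1 : HasDerivAt (fun u : ℝ => u / 2) (1 / 2) 0 := by
      simpa using (hasDerivAt_id (0 : ℝ)).div_const 2
    have h2 : HasDerivAt (fun u : ℝ => 1 + u / 2) (1 / 2) 0 := by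
      simpa using h1.const_add 1
    have hq : HasDerivAt (fun u : ℝ => (u / 2) / (1 + u / 2)) (1 / 2) 0 := by
      have := h1.div h2 (by norm_num)
      exact this.congr_deriv (by norm_num)
    have := (hq.const_mul (1 / 2 : ℝ)).const_sub (1 / 2 : ℝ)
    exact this.congr_deriv (by norm_num)
  have hg0 : g 0 = 1 / 2 := by simp [g]
  have hdv : deriv g 0 = -(1 / 4) := hd.deriv
  refine ⟨hg0, hdv, by rw [hdv]; norm_num, by rw [hg0]; ring, ?_⟩
  rw [hdv, hg0]; norm_num
end
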